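/- If s_1, …, s_m ∈ H_1(K_b) have cosets modulo im(φ_{b−1}) that are linearly independent in H_1(K_b)/im(φ_{b−1}) and each s_i has persistence interval (b, d_i) in H_1(K_•) (with d_i ∈ {b+1,…,n} ∪ {∞}), then the images θ_{1,b}(s_1), …, θ_{1,b}(s_m) have cosets modulo im(ψ_{b−1}) that are linearly independent in H_1(K̃_b)/im(ψ_{b−1}) and each θ_{1,b}(s_i) has persistence interval (b, d_i) in H_1(K̃_•); hence the 1st persistence barcode of K_• is contained as a multiset in the 1st persistence barcode of K̃_•. Moreover, for every q > 1 and every i ∈ {1,…,n}, the map θ_{q,i} : H_q(K_i) → H_q(K̃_i) is an isomorphism commuting with the connecting maps, so for q > 1 the q-th persistence barcodes of K_• and K̃_• coincide. -/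

import Mathlib

/-- An abstract simplicial complex on a vertex type `α`: a collection of nonempty
finite subsets of `α` closed under passing to nonempty subsets. -/
structure AbsSC (α : Type) where
  faces : Set (Finset α)
  not_empty_mem : ∅ ∉ faces
  down_closed : ∀ {s t : Finset α}, s ∈ faces → t ⊆ s → t.Nonempty → t ∈ faces

namespace AbsSC

variable {α : Type}

/-- The vertex set of an abstract simplicial complex. -/
def vertexSet (K : AbsSC α) : Set α := {v | {v} ∈ K.faces}

/-- The type of `q`-simplices (faces with `q+1` vertices). -/
def simplices (K : AbsSC α) (q : ℕ) : Type :=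
  {s : Finset α // s ∈ K.faces ∧ s.card = q + 1}

/-- The space of `q`-chains over `ℤ/2`: formal sums of `q`-simplices. -/
abbrev Chain (K : AbsSC α) (q : ℕ) : Type := K.simplices q →₀ ZMod 2

/-- The sum of the `q`-dimensional faces of a `(q+1)`-simplex. -/
noncomputable def faceChain (K : AbsSC α) (q : ℕ) (s : K.simplices (q + 1)) : K.Chain q :=
  ∑ t ∈ (s.1.powersetCard (q + 1)).attach,
    Finsupp.single
      ⟨t.1, by
        obtain ⟨hsub, hcard⟩ := Finset.mem_powersetCard.mp t.2
        refine ⟨K.down_closed s.2.1 hsub ?_, hcard⟩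
        rw [← Finset.card_pos, hcard]
        omega⟩
      (1 : ZMod 2)

/-- The boundary map `∂_{q+1} : C_{q+1}(K) → C_q(K)`, sending each `(q+1)`-simplex to
the sum of its `q`-dimensional faces. -/
noncomputable def boundary (K : AbsSC α) (q : ℕ) :
    K.Chain (q + 1) →ₗ[ZMod 2] K.Chain q :=
  Finsupp.lsum (ZMod 2) fun s => LinearMap.toSpanSingleton (ZMod 2) (K.Chain q) (K.faceChain q s)

/-- The cycle subspace: `ker ∂_q` (all of `C_0` in degree `0`). -/
noncomputable def cycles (K : AbsSC α) : (q : ℕ) → Submodule (ZMod 2) (K.Chain q)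
  | 0 => ⊤
  | q + 1 => LinearMap.ker (K.boundary q)

/-- The boundaries, viewed as a submodule of the cycles. -/
noncomputable def boundariesIn (K : AbsSC α) (q : ℕ) :
    Submodule (ZMod 2) (K.cycles q) :=
  Submodule.comap (K.cycles q).subtype (LinearMap.range (K.boundary q))

/-- The `q`-th simplicial homology over `ℤ/2`: `H_q(K) = ker ∂_q / im ∂_{q+1}`. -/
def Homology (K : AbsSC α) (q : ℕ) : Type :=
  (K.cycles q) ⧸ (K.boundariesIn q)

noncomputable instance (K : AbsSC α) (q : ℕ) : AddCommGroup (K.Homology q) :=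
  inferInstanceAs (AddCommGroup ((K.cycles q) ⧸ (K.boundariesIn q)))

noncomputable instance (K : AbsSC α) (q : ℕ) : Module (ZMod 2) (K.Homology q) :=
  inferInstanceAs (Module (ZMod 2) ((K.cycles q) ⧸ (K.boundariesIn q)))

/-- The homology class of a cycle. -/
noncomputable def hClass (K : AbsSC α) (q : ℕ) (c : K.Chain q) (hc : c ∈ K.cycles q) :
    K.Homology q :=
  Submodule.Quotient.mk ⟨c, hc⟩

/-- The chain map induced by an inclusion of simplicial complexes. -/
noncomputable def chainMap (K L : AbsSC α) (h : K.faces ⊆ L.faces) (q : ℕ) :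
    K.Chain q →ₗ[ZMod 2] L.Chain q :=
  Finsupp.lmapDomain (ZMod 2) (ZMod 2) fun s : K.simplices q =>
    (⟨s.1, h s.2.1, s.2.2⟩ : L.simplices q)

/-- `θ` is the map on `q`-th homology induced by the inclusion `K ⊆ L`: it sends the
class of every cycle `c` of `K` to the class of the image chain of `c` in `L`. -/
def InducedHom (K L : AbsSC α) (q : ℕ)
    (θ : K.Homology q →ₗ[ZMod 2] L.Homology q) : Prop :=
  ∃ h : K.faces ⊆ L.faces,
    ∀ (c : K.Chain q) (hc : c ∈ K.cycles q),
      ∃ hc' : chainMap K L h q c ∈ L.cycles q,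
        θ (K.hClass q c hc) = L.hClass q (chainMap K L h q c) hc'

end AbsSC

/-- The faces of the gluing stars `S = S_1 ⊔ ⋯ ⊔ S_k`: for each `j`, the vertex `{z j}`,
the vertices `{v}` for `v ∈ P j`, and the edges `{z j, v}` for `v ∈ P j`. -/
def starFaces {α : Type} [DecidableEq α] {k : ℕ} (P : Fin k → Set α) (z : Fin k → α) :
    Set (Finset α) :=
  {s | ∃ j : Fin k, s = {z j} ∨ ∃ v ∈ P j, s = {v} ∨ s = {z j, v}}

section Tower

variable {W : ℕ → Type} [∀ i, AddCommGroup (W i)] [∀ i, Module (ZMod 2) (W i)]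

/-- The composite `φ_{i,j} = φ_{j-1} ∘ ⋯ ∘ φ_i` of the connecting maps of a tower
(the identity when `i = j`). -/
noncomputable def comps (φ : ∀ i, W i →ₗ[ZMod 2] W (i + 1)) {i j : ℕ} (h : i ≤ j) :
    W i →ₗ[ZMod 2] W j :=
  Nat.leRecOn (C := fun m => W i →ₗ[ZMod 2] W m) h (fun {m} g => (φ m).comp g) LinearMap.id

/-- `s ∈ W b` has persistence interval `(b, d)` with finite death `d ∈ {b+1, …, n}`:
`s ∉ im φ_{b-1}`, `φ_{b,d'}(s) ∉ im φ_{b-1,d'}` for all `b ≤ d' < d`, and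
`φ_{b,d}(s) ∈ im φ_{b-1,d}`. -/
def HasPersIntervalFin (φ : ∀ i, W i →ₗ[ZMod 2] W (i + 1)) (n b d : ℕ) (s : W b) : Prop :=
  ∃ (_ : 1 ≤ b) (hbd : b < d) (_ : d ≤ n),
    s ∉ LinearMap.range (comps φ (Nat.sub_le b 1)) ∧
    (∀ (d' : ℕ) (hd' : b ≤ d'), d' < d →
      comps φ hd' s ∉ LinearMap.range (comps φ (Nat.le_trans (Nat.sub_le b 1) hd'))) ∧
    comps φ (Nat.le_of_lt hbd) s ∈
      LinearMap.range (comps φ (Nat.le_trans (Nat.sub_le b 1) (Nat.le_of_lt hbd)))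

/-- `s ∈ W b` has persistence interval `(b, ∞)`: `s ∉ im φ_{b-1}` and
`φ_{b,d'}(s) ∉ im φ_{b-1,d'}` for all `b ≤ d' ≤ n`. -/
def HasPersIntervalInf (φ : ∀ i, W i →ₗ[ZMod 2] W (i + 1)) (n b : ℕ) (s : W b) : Prop :=
  ∃ _ : 1 ≤ b,
    s ∉ LinearMap.range (comps φ (Nat.sub_le b 1)) ∧
    ∀ (d' : ℕ) (hd' : b ≤ d'), d' ≤ n →
      comps φ hd' s ∉ LinearMap.range (comps φ (Nat.le_trans (Nat.sub_le b 1) hd'))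

end Tower

/-! The stars only add simplices with at most two vertices, so in degrees `≥ 2` the chain groups
of `K_i` and `K̃_i` coincide; hence `θ_{q,i}` is bijective for `q ≥ 2` and injective for `q = 1`.
A star edge contains an apex `z_j`, which is not a vertex of any `K_j`, and is a face of no
`2`-simplex of `K̃_j`. So a `1`-cycle of `K̃_i` that becomes homologous in `K̃_j` to a cycle of `K_j`
uses no star edge and is already a cycle of `K_i`: `θ_{1,j}(x) ∈ im ψ_{i,j}` forces
`x ∈ im φ_{i,j}`. This transports births, deaths and independence modulo `im φ_{b-1}` from
`H_1(K_•)` to `H_1(K̃_•)`. -/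

namespace AbsSC

variable {α : Type} {K L : AbsSC α}

def simplexIncl (h : K.faces ⊆ L.faces) (q : ℕ) (s : K.simplices q) : L.simplices q :=
  ⟨s.1, h s.2.1, s.2.2⟩

lemma simplexIncl_injective (h : K.faces ⊆ L.faces) (q : ℕ) :
    Function.Injective (simplexIncl h q) :=
  fun _ _ hst => Subtype.ext (congrArg Subtype.val hst :)

lemma chainMap_apply (h : K.faces ⊆ L.faces) (q : ℕ) (c : K.Chain q) :
    chainMap K L h q c = c.mapDomain (simplexIncl h q) := rfl

lemma chainMap_single (h : K.faces ⊆ L.faces) (q : ℕ) (s : K.simplices q) (r : ZMod 2) :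
    chainMap K L h q (Finsupp.single s r) = Finsupp.single (simplexIncl h q s) r :=
  Finsupp.mapDomain_single

lemma chainMap_injective (h : K.faces ⊆ L.faces) (q : ℕ) :
    Function.Injective (chainMap K L h q) :=
  Finsupp.mapDomain_injective (simplexIncl_injective h q)

lemma chainMap_refl (h : K.faces ⊆ K.faces) (q : ℕ) (c : K.Chain q) :
    chainMap K K h q c = c :=
  Finsupp.mapDomain_id

lemma chainMap_chainMap {M : AbsSC α} (hKL : K.faces ⊆ L.faces) (hLM : L.faces ⊆ M.faces)
    (q : ℕ) (c : K.Chain q) :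
    chainMap L M hLM q (chainMap K L hKL q c) = chainMap K M (hKL.trans hLM) q c :=
  Finsupp.mapDomain_comp.symm

lemma chainMap_faceChain (h : K.faces ⊆ L.faces) (q : ℕ) (s : K.simplices (q + 1)) :
    chainMap K L h q (K.faceChain q s) = L.faceChain q (simplexIncl h (q + 1) s) := by
  rw [faceChain, map_sum]
  exact Finset.sum_congr rfl fun _ _ => chainMap_single h q _ 1

lemma boundary_single (q : ℕ) (s : K.simplices (q + 1)) (r : ZMod 2) :
    K.boundary q (Finsupp.single s r) = r • K.faceChain q s :=
  Finsupp.lsum_single _ _ _ _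

lemma boundary_chainMap (h : K.faces ⊆ L.faces) (q : ℕ) (c : K.Chain (q + 1)) :
    L.boundary q (chainMap K L h (q + 1) c) = chainMap K L h q (K.boundary q c) := by
  induction c using Finsupp.induction_linear with
  | zero => simp only [map_zero]
  | add f g hf hg => simp only [map_add, hf, hg]
  | single s r =>
    rw [chainMap_single, boundary_single, boundary_single, map_smul, chainMap_faceChain]

lemma chainMap_mem_cycles_iff (h : K.faces ⊆ L.faces) {q : ℕ} {c : K.Chain q} :
    chainMap K L h q c ∈ L.cycles q ↔ c ∈ K.cycles q := by
  cases q with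
  | zero => exact iff_of_true trivial trivial
  | succ q =>
    change L.boundary q _ = 0 ↔ K.boundary q c = 0
    rw [boundary_chainMap, ← map_zero (chainMap K L h q), (chainMap_injective h q).eq_iff]

lemma chainMap_surjective (h : K.faces ⊆ L.faces) (q : ℕ)
    (hall : ∀ s : L.simplices q, s.1 ∈ K.faces) :
    Function.Surjective (chainMap K L h q) := by
  intro c
  refine ⟨c.mapDomain fun s => ⟨s.1, hall s, s.2.2⟩, ?_⟩
  exact Finsupp.mapDomain_comp.symm.trans Finsupp.mapDomain_id

lemma exists_chainMap_eq_of_support (h : K.faces ⊆ L.faces) {q : ℕ} (c : L.Chain q)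
    (hsupp : ∀ s ∈ c.support, s.1 ∈ K.faces) :
    ∃ a : K.Chain q, chainMap K L h q a = c := by
  have hrange : ↑c.support ⊆ Set.range (simplexIncl h q) :=
    fun s hs => ⟨⟨s.1, hsupp s hs, s.2.2⟩, rfl⟩
  exact ⟨c.comapDomain _ (simplexIncl_injective h q).injOn,
    Finsupp.mapDomain_comapDomain _ (simplexIncl_injective h q) c hrange⟩

lemma exists_chainMap_eq_of_chainMap_eq_chainMap {A B : AbsSC α} (hBA : B.faces ⊆ A.faces)
    (hAL : A.faces ⊆ L.faces) (hKL : K.faces ⊆ L.faces) {q : ℕ}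
    (hedge : ∀ s : A.simplices q, s.1 ∈ K.faces → s.1 ∈ B.faces)
    {c : A.Chain q} {c' : K.Chain q} (hcc' : chainMap A L hAL q c = chainMap K L hKL q c') :
    ∃ a : B.Chain q, chainMap B A hBA q a = c := by
  refine exists_chainMap_eq_of_support hBA c fun s hs => hedge s ?_
  -- inclusions preserve coefficients, so a simplex of `c` outside `K` would survive in `L`
  by_contra hsK
  have hcoeff : chainMap A L hAL q c (simplexIncl hAL q s) = c s :=
    Finsupp.mapDomain_apply (simplexIncl_injective hAL q) c s
  rw [hcc', chainMap_apply, Finsupp.mapDomain_of_notMem_range _ _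
    fun ⟨t, ht⟩ => hsK (congrArg Subtype.val ht ▸ t.2.1)] at hcoeff
  exact Finsupp.mem_support_iff.mp hs hcoeff.symm

lemma exists_hClass_eq (q : ℕ) (y : K.Homology q) :
    ∃ (c : K.Chain q) (hc : c ∈ K.cycles q), K.hClass q c hc = y := by
  obtain ⟨⟨c, hc⟩, hy⟩ := Submodule.Quotient.mk_surjective (K.boundariesIn q) y
  exact ⟨c, hc, hy⟩

lemma hClass_congr {q : ℕ} {c c' : K.Chain q} (h : c = c') (hc : c ∈ K.cycles q)
    (hc' : c' ∈ K.cycles q) : K.hClass q c hc = K.hClass q c' hc' := by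
  subst h
  rfl

lemma hClass_eq_iff {q : ℕ} {c c' : K.Chain q} (hc : c ∈ K.cycles q) (hc' : c' ∈ K.cycles q) :
    K.hClass q c hc = K.hClass q c' hc' ↔ c - c' ∈ LinearMap.range (K.boundary q) :=
  Submodule.Quotient.eq (K.boundariesIn q)

lemma hClass_eq_zero_iff {q : ℕ} {c : K.Chain q} (hc : c ∈ K.cycles q) :
    K.hClass q c hc = 0 ↔ c ∈ LinearMap.range (K.boundary q) :=
  (hClass_eq_iff hc (Submodule.zero_mem _)).trans (by rw [sub_zero])

lemma exists_chainMap_eq_of_hClass_eq (h : K.faces ⊆ L.faces) {q : ℕ}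
    (hall : ∀ s : L.simplices (q + 1), s.1 ∈ K.faces) {c : L.Chain q} {c' : K.Chain q}
    (hc : c ∈ L.cycles q) (hc' : chainMap K L h q c' ∈ L.cycles q)
    (hcc' : L.hClass q c hc = L.hClass q (chainMap K L h q c') hc') :
    ∃ a : K.Chain q, chainMap K L h q a = c := by
  obtain ⟨f, hf⟩ := (hClass_eq_iff hc hc').mp hcc'
  obtain ⟨g, rfl⟩ := chainMap_surjective h (q + 1) hall f
  rw [boundary_chainMap, eq_sub_iff_add_eq, ← map_add] at hf
  exact ⟨_, hf⟩

lemma InducedHom.apply_hClass {q : ℕ} {θ : K.Homology q →ₗ[ZMod 2] L.Homology q}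
    (hθ : InducedHom K L q θ) (h : K.faces ⊆ L.faces) (c : K.Chain q) (hc : c ∈ K.cycles q) :
    θ (K.hClass q c hc) = L.hClass q (chainMap K L h q c) ((chainMap_mem_cycles_iff h).2 hc) :=
  (hθ.2 c hc).2

lemma InducedHom.injective {q : ℕ} {θ : K.Homology q →ₗ[ZMod 2] L.Homology q}
    (hθ : InducedHom K L q θ) (hall : ∀ s : L.simplices (q + 1), s.1 ∈ K.faces) :
    Function.Injective θ := by
  refine (injective_iff_map_eq_zero θ).mpr fun x hx => ?_
  obtain ⟨c, hc, rfl⟩ := exists_hClass_eq q x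
  rw [hθ.apply_hClass hθ.1, hClass_eq_zero_iff] at hx
  obtain ⟨f, hf⟩ := hx
  obtain ⟨g, rfl⟩ := chainMap_surjective hθ.1 (q + 1) hall f
  rw [boundary_chainMap] at hf
  exact (hClass_eq_zero_iff hc).mpr ⟨g, chainMap_injective hθ.1 q hf⟩

lemma InducedHom.surjective {q : ℕ} {θ : K.Homology q →ₗ[ZMod 2] L.Homology q}
    (hθ : InducedHom K L q θ) (hall : ∀ s : L.simplices q, s.1 ∈ K.faces) :
    Function.Surjective θ := by
  intro y
  obtain ⟨c', hc', rfl⟩ := exists_hClass_eq q y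
  obtain ⟨c, rfl⟩ := chainMap_surjective hθ.1 q hall c'
  have hc := (chainMap_mem_cycles_iff hθ.1).1 hc'
  exact ⟨K.hClass q c hc, hθ.apply_hClass hθ.1 c hc⟩

end AbsSC

section Persistence

variable {W W' : ℕ → Type} [∀ i, AddCommGroup (W i)] [∀ i, Module (ZMod 2) (W i)]
  [∀ i, AddCommGroup (W' i)] [∀ i, Module (ZMod 2) (W' i)]
  {φ : ∀ i, W i →ₗ[ZMod 2] W (i + 1)} {ψ : ∀ i, W' i →ₗ[ZMod 2] W' (i + 1)}
  {θ : ∀ i, W i →ₗ[ZMod 2] W' i} {n b : ℕ}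

lemma comps_self (φ : ∀ i, W i →ₗ[ZMod 2] W (i + 1)) {i : ℕ} (h : i ≤ i) :
    comps φ h = LinearMap.id :=
  Nat.leRecOn_self _

lemma comps_succ (φ : ∀ i, W i →ₗ[ZMod 2] W (i + 1)) {i j : ℕ} (hij : i ≤ j)
    (h : i ≤ j + 1) : comps φ h = (φ j).comp (comps φ hij) :=
  Nat.leRecOn_succ hij _

lemma comps_comm (hsq : ∀ i, i < n → (θ (i + 1)).comp (φ i) = (ψ i).comp (θ i))
    {i j : ℕ} (hij : i ≤ j) (hjn : j ≤ n) (x : W i) :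
    θ j (comps φ hij x) = comps ψ hij (θ i x) := by
  induction j, hij using Nat.le_induction with
  | base => rw [comps_self, comps_self]; rfl
  | succ j hij ih =>
    rw [comps_succ φ hij, comps_succ ψ hij, LinearMap.comp_apply, LinearMap.comp_apply,
      ← ih (by omega), ← LinearMap.comp_apply, hsq j (by omega), LinearMap.comp_apply]

lemma linearIndependent_mk_map {ι R M M' : Type*} [Ring R] [AddCommGroup M] [Module R M]
    [AddCommGroup M'] [Module R M'] (f : M →ₗ[R] M') {p : Submodule R M} {p' : Submodule R M'}
    (hp : p'.comap f = p) {v : ι → M}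
    (hv : LinearIndependent R fun i => Submodule.Quotient.mk (p := p) (v i)) :
    LinearIndependent R fun i => Submodule.Quotient.mk (p := p') (f (v i)) :=
  hv.map' (p.mapQ p' f hp.ge) (by rw [Submodule.ker_mapQ, hp, Submodule.mkQ_map_self])

lemma comps_apply_notMem_range_map (hsq : ∀ i, i < n → (θ (i + 1)).comp (φ i) = (ψ i).comp (θ i))
    (hrefl : ∀ j (hj : b ≤ j), j ≤ n → ∀ x : W j,
      θ j x ∈ LinearMap.range (comps ψ ((Nat.sub_le b 1).trans hj)) →
        x ∈ LinearMap.range (comps φ ((Nat.sub_le b 1).trans hj)))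
    {j : ℕ} (hj : b ≤ j) (hjn : j ≤ n) {s : W b}
    (hs : comps φ hj s ∉ LinearMap.range (comps φ ((Nat.sub_le b 1).trans hj))) :
    comps ψ hj (θ b s) ∉ LinearMap.range (comps ψ ((Nat.sub_le b 1).trans hj)) := by
  rw [← comps_comm hsq hj hjn]
  exact fun hmem => hs (hrefl j hj hjn _ hmem)

lemma HasPersIntervalFin.map (hsq : ∀ i, i < n → (θ (i + 1)).comp (φ i) = (ψ i).comp (θ i))
    (hrefl : ∀ j (hj : b ≤ j), j ≤ n → ∀ x : W j,
      θ j x ∈ LinearMap.range (comps ψ ((Nat.sub_le b 1).trans hj)) →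
        x ∈ LinearMap.range (comps φ ((Nat.sub_le b 1).trans hj)))
    {d : ℕ} {s : W b} (hs : HasPersIntervalFin φ n b d s) :
    HasPersIntervalFin ψ n b d (θ b s) := by
  obtain ⟨hb, hbd, hdn, hborn, halive, ⟨w, hw⟩⟩ := hs
  refine ⟨hb, hbd, hdn, fun hmem => hborn (hrefl b le_rfl (by omega) s hmem),
    fun d' hd' hd'd => comps_apply_notMem_range_map hsq hrefl hd' (by omega)
      (halive d' hd' hd'd), θ (b - 1) w, ?_⟩
  rw [← comps_comm hsq _ hdn, hw, comps_comm hsq _ hdn]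

lemma HasPersIntervalInf.map (hsq : ∀ i, i < n → (θ (i + 1)).comp (φ i) = (ψ i).comp (θ i))
    (hrefl : ∀ j (hj : b ≤ j), j ≤ n → ∀ x : W j,
      θ j x ∈ LinearMap.range (comps ψ ((Nat.sub_le b 1).trans hj)) →
        x ∈ LinearMap.range (comps φ ((Nat.sub_le b 1).trans hj)))
    (hbn : b ≤ n) {s : W b} (hs : HasPersIntervalInf φ n b s) :
    HasPersIntervalInf ψ n b (θ b s) := by
  obtain ⟨hb, hborn, halive⟩ := hs
  exact ⟨hb, fun hmem => hborn (hrefl b le_rfl hbn s hmem),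
    fun d' hd' hd'n => comps_apply_notMem_range_map hsq hrefl hd' hd'n (halive d' hd' hd'n)⟩

lemma linearIndependent_mk_range_comps (hsq : ∀ i, i < n → (θ (i + 1)).comp (φ i) = (ψ i).comp (θ i))
    (hrefl : ∀ j (hj : b ≤ j), j ≤ n → ∀ x : W j,
      θ j x ∈ LinearMap.range (comps ψ ((Nat.sub_le b 1).trans hj)) →
        x ∈ LinearMap.range (comps φ ((Nat.sub_le b 1).trans hj)))
    (hbn : b ≤ n) {ι : Type*} {s : ι → W b}
    (hs : LinearIndependent (ZMod 2) fun i =>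
      Submodule.Quotient.mk (p := LinearMap.range (comps φ (Nat.sub_le b 1))) (s i)) :
    LinearIndependent (ZMod 2) fun i =>
      Submodule.Quotient.mk (p := LinearMap.range (comps ψ (Nat.sub_le b 1))) (θ b (s i)) := by
  refine linearIndependent_mk_map (θ b) (le_antisymm ?_ ?_) hs
  · exact fun x hx => hrefl b le_rfl hbn x hx
  rintro _ ⟨w, rfl⟩
  exact ⟨θ (b - 1) w, (comps_comm hsq _ hbn w).symm⟩

end Persistence

section Filtration

open AbsSC

variable {α : Type} {K Kt : ℕ → AbsSC α} {n q : ℕ}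

lemma faces_mono (hmono : ∀ i, i < n → (K i).faces ⊆ (K (i + 1)).faces)
    {i j : ℕ} (hij : i ≤ j) (hjn : j ≤ n) : (K i).faces ⊆ (K j).faces := by
  induction j, hij using Nat.le_induction with
  | base => exact subset_rfl
  | succ j hij ih => exact (ih (by omega)).trans (hmono j (by omega))

lemma comps_hClass (hmono : ∀ i, i < n → (K i).faces ⊆ (K (i + 1)).faces)
    {φ : ∀ i, (K i).Homology q →ₗ[ZMod 2] (K (i + 1)).Homology q}
    (hφ : ∀ i, i < n → InducedHom (K i) (K (i + 1)) q (φ i))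
    {i j : ℕ} (hij : i ≤ j) (hjn : j ≤ n) (c : (K i).Chain q) (hc : c ∈ (K i).cycles q) :
    comps φ hij ((K i).hClass q c hc) =
      (K j).hClass q (chainMap (K i) (K j) (faces_mono hmono hij hjn) q c)
        ((chainMap_mem_cycles_iff _).2 hc) := by
  induction j, hij using Nat.le_induction with
  | base =>
    rw [comps_self, LinearMap.id_apply]
    exact hClass_congr (chainMap_refl _ q c).symm _ _
  | succ j hij ih =>
    rw [comps_succ φ hij, LinearMap.comp_apply, ih (by omega),
      (hφ j (by omega)).apply_hClass (hmono j (by omega))]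
    exact hClass_congr (chainMap_chainMap _ _ q c) _ _

lemma mem_range_comps_of_apply_mem_range
    (hKtmono : ∀ i, i < n → (Kt i).faces ⊆ (Kt (i + 1)).faces)
    {φ : ∀ i, (K i).Homology q →ₗ[ZMod 2] (K (i + 1)).Homology q}
    {ψ : ∀ i, (Kt i).Homology q →ₗ[ZMod 2] (Kt (i + 1)).Homology q}
    {θ : ∀ i, (K i).Homology q →ₗ[ZMod 2] (Kt i).Homology q}
    (hψ : ∀ i, i < n → InducedHom (Kt i) (Kt (i + 1)) q (ψ i))
    (hsq : ∀ i, i < n → (θ (i + 1)).comp (φ i) = (ψ i).comp (θ i))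
    {i j : ℕ} (hij : i ≤ j) (hjn : j ≤ n)
    (hθi : InducedHom (K i) (Kt i) q (θ i)) (hθj : InducedHom (K j) (Kt j) q (θ j))
    (hedge : ∀ s : (Kt i).simplices q, s.1 ∈ (K j).faces → s.1 ∈ (K i).faces)
    (hhigh : ∀ s : (Kt j).simplices (q + 1), s.1 ∈ (K j).faces)
    {x : (K j).Homology q} (hx : θ j x ∈ LinearMap.range (comps ψ hij)) :
    x ∈ LinearMap.range (comps φ hij) := by
  obtain ⟨y, hy⟩ := hx
  obtain ⟨c, hc, rfl⟩ := exists_hClass_eq q y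
  obtain ⟨cx, hcx, rfl⟩ := exists_hClass_eq q x
  rw [comps_hClass hKtmono hψ hij hjn, hθj.apply_hClass hθj.1] at hy
  obtain ⟨c', hc'⟩ := exists_chainMap_eq_of_hClass_eq hθj.1 hhigh _ _ hy
  obtain ⟨a, rfl⟩ := exists_chainMap_eq_of_chainMap_eq_chainMap hθi.1
    (faces_mono hKtmono hij hjn) hθj.1 hedge hc'.symm
  have ha := (chainMap_mem_cycles_iff hθi.1).1 hc
  refine ⟨(K i).hClass q a ha, hθj.injective hhigh ?_⟩
  rw [comps_comm hsq hij hjn, hθi.apply_hClass hθi.1, comps_hClass hKtmono hψ hij hjn,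
    hθj.apply_hClass hθj.1]
  exact hy

end Filtration

section Star

variable {α : Type} [DecidableEq α] {k : ℕ} {P : Fin k → Set α} {z : Fin k → α}
  {K Kt : AbsSC α}

lemma card_le_two_of_mem_starFaces {s : Finset α} (hs : s ∈ starFaces P z) : s.card ≤ 2 := by
  obtain ⟨j, rfl | ⟨v, -, rfl | rfl⟩⟩ := hs
  · simp
  · simp
  · exact (Finset.card_insert_le _ _).trans (by simp)

lemma exists_apex_mem_of_mem_starFaces {s : Finset α} (hs : s ∈ starFaces P z)
    (hcard : 2 ≤ s.card) : ∃ j, z j ∈ s := by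
  obtain ⟨j, rfl | ⟨v, -, rfl | rfl⟩⟩ := hs
  · simp at hcard
  · simp at hcard
  · exact ⟨j, Finset.mem_insert_self _ _⟩

lemma mem_faces_of_subset_union_starFaces (hKt : Kt.faces ⊆ K.faces ∪ starFaces P z) {q : ℕ}
    (hq : 2 ≤ q) (s : Kt.simplices q) : s.1 ∈ K.faces :=
  (hKt s.2.1).resolve_right fun hs => by
    have := card_le_two_of_mem_starFaces hs
    have := s.2.2
    omega

lemma edge_mem_faces_of_subset_union_starFaces (hKt : Kt.faces ⊆ K.faces ∪ starFaces P z)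
    {L : AbsSC α} (hz : ∀ j, z j ∉ L.vertexSet) (s : Kt.simplices 1) (hs : s.1 ∈ L.faces) :
    s.1 ∈ K.faces :=
  (hKt s.2.1).resolve_right fun hstar => by
    obtain ⟨j, hj⟩ := exists_apex_mem_of_mem_starFaces hstar s.2.2.ge
    exact hz j (L.down_closed hs (Finset.singleton_subset_iff.mpr hj)
      (Finset.singleton_nonempty _))

end Star

theorem stmt15_general {α : Type} [DecidableEq α] (n k : ℕ)
    (K Kt : ℕ → AbsSC α)
    (hKt0 : (Kt 0).faces = ∅)
    (hKtmono : ∀ i, i < n → (Kt i).faces ⊆ (Kt (i + 1)).faces)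
    (P : Fin k → Set α)
    (z : Fin k → α)
    (hznew : ∀ (j : Fin k) (i : ℕ), i ≤ n → z j ∉ (K i).vertexSet)
    (hKt : ∀ i, 1 ≤ i → i ≤ n → (Kt i).faces = (K i).faces ∪ starFaces P z)
    (φ : ∀ (q i : ℕ), (K i).Homology q →ₗ[ZMod 2] (K (i + 1)).Homology q)
    (ψ : ∀ (q i : ℕ), (Kt i).Homology q →ₗ[ZMod 2] (Kt (i + 1)).Homology q)
    (θ : ∀ (q i : ℕ), (K i).Homology q →ₗ[ZMod 2] (Kt i).Homology q)
    (hψ : ∀ q i, i < n → AbsSC.InducedHom (Kt i) (Kt (i + 1)) q (ψ q i))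
    (hθ : ∀ q i, i ≤ n → AbsSC.InducedHom (K i) (Kt i) q (θ q i))
    (hsq : ∀ q i, i < n → (θ q (i + 1)).comp (φ q i) = (ψ q i).comp (θ q i))
    (b : ℕ) (hbn : b ≤ n)
    (m : ℕ)
    (s : Fin m → (K b).Homology 1)
    (dd : Fin m → ℕ∞)
    (hsindep : LinearIndependent (ZMod 2)
      (fun i : Fin m =>
        Submodule.Quotient.mk (p := LinearMap.range (comps (φ 1) (Nat.sub_le b 1))) (s i)))
    (hsfin : ∀ (i : Fin m) (di : ℕ), dd i = (di : ℕ∞) →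
      HasPersIntervalFin (φ 1) n b di (s i))
    (hsinf : ∀ i : Fin m, dd i = ⊤ → HasPersIntervalInf (φ 1) n b (s i)) :
    (LinearIndependent (ZMod 2)
      (fun i : Fin m =>
        Submodule.Quotient.mk (p := LinearMap.range (comps (ψ 1) (Nat.sub_le b 1)))
          (θ 1 b (s i)))) ∧
    (∀ (i : Fin m) (di : ℕ), dd i = (di : ℕ∞) →
      HasPersIntervalFin (ψ 1) n b di (θ 1 b (s i))) ∧
    (∀ i : Fin m, dd i = ⊤ → HasPersIntervalInf (ψ 1) n b (θ 1 b (s i))) ∧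
    (∀ q : ℕ, 1 < q → ∀ i : ℕ, 1 ≤ i → i ≤ n → Function.Bijective (θ q i)) := by
  have hKtsub : ∀ i, i ≤ n → (Kt i).faces ⊆ (K i).faces ∪ starFaces P z := by
    rintro (_ | i) hi
    · rw [hKt0]
      exact Set.empty_subset _
    · rw [hKt (i + 1) (by omega) hi]
  have hhigh : ∀ i, i ≤ n → ∀ q, 2 ≤ q → ∀ s : (Kt i).simplices q, s.1 ∈ (K i).faces :=
    fun i hi _ hq => mem_faces_of_subset_union_starFaces (hKtsub i hi) hq
  have hrefl : ∀ j (hj : b ≤ j), j ≤ n → ∀ x : (K j).Homology 1,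
      θ 1 j x ∈ LinearMap.range (comps (ψ 1) ((Nat.sub_le b 1).trans hj)) →
        x ∈ LinearMap.range (comps (φ 1) ((Nat.sub_le b 1).trans hj)) :=
    fun j hj hjn _ => mem_range_comps_of_apply_mem_range hKtmono (hψ 1) (hsq 1) _ hjn
      (hθ 1 _ (by omega)) (hθ 1 j hjn)
      (edge_mem_faces_of_subset_union_starFaces (hKtsub _ (by omega)) (hznew · j hjn))
      (hhigh j hjn 2 le_rfl)
  refine ⟨linearIndependent_mk_range_comps (hsq 1) hrefl hbn hsindep,
    fun i di hdi => (hsfin i di hdi).map (hsq 1) hrefl,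
    fun i hi => (hsinf i hi).map (hsq 1) hrefl hbn,
    fun q hq i _ hin => ⟨(hθ q i hin).injective (hhigh i hin (q + 1) (by omega)),
      (hθ q i hin).surjective (hhigh i hin q hq)⟩⟩

/-- if `s 0, …, s (m-1) ∈ H_1(K_b)` have linearly independent cosets
modulo `im φ_{b-1}` and each `s i` has persistence interval `(b, dd i)` in `H_1(K_•)`
(with `dd i ∈ {b+1, …, n} ∪ {∞}`), then the images `θ_{1,b}(s i)` have linearly
independent cosets modulo `im ψ_{b-1}` and each `θ_{1,b}(s i)` has persistence
interval `(b, dd i)` in `H_1(K̃_•)` (hence the 1st persistence barcode of `K_•` is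
contained as a multiset in that of `K̃_•`); moreover, for every `q > 1` and every
`i ∈ {1, …, n}`, the map `θ_{q,i} : H_q(K_i) → H_q(K̃_i)` is an isomorphism
(commuting with the connecting maps, by `hsq`), so for `q > 1` the `q`-th persistence
barcodes of `K_•` and `K̃_•` coincide. -/
theorem stmt15 {α : Type} [DecidableEq α] (n k : ℕ)
    (K Kt : ℕ → AbsSC α)
    (hK0 : (K 0).faces = ∅)
    (hKt0 : (Kt 0).faces = ∅)
    (hKmono : ∀ i, i < n → (K i).faces ⊆ (K (i + 1)).faces)
    (hKtmono : ∀ i, i < n → (Kt i).faces ⊆ (Kt (i + 1)).faces)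
    (P : Fin k → Set α)
    (hPne : ∀ j, (P j).Nonempty)
    (hPdisj : Pairwise (Function.onFun Disjoint P))
    (hPunion : (⋃ j, P j) = (K 1).vertexSet)
    (z : Fin k → α)
    (hzinj : Function.Injective z)
    (hznew : ∀ (j : Fin k) (i : ℕ), i ≤ n → z j ∉ (K i).vertexSet)
    (hKt : ∀ i, 1 ≤ i → i ≤ n → (Kt i).faces = (K i).faces ∪ starFaces P z)
    (φ : ∀ (q i : ℕ), (K i).Homology q →ₗ[ZMod 2] (K (i + 1)).Homology q)
    (ψ : ∀ (q i : ℕ), (Kt i).Homology q →ₗ[ZMod 2] (Kt (i + 1)).Homology q)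
    (θ : ∀ (q i : ℕ), (K i).Homology q →ₗ[ZMod 2] (Kt i).Homology q)
    (hφ : ∀ q i, i < n → AbsSC.InducedHom (K i) (K (i + 1)) q (φ q i))
    (hψ : ∀ q i, i < n → AbsSC.InducedHom (Kt i) (Kt (i + 1)) q (ψ q i))
    (hθ : ∀ q i, i ≤ n → AbsSC.InducedHom (K i) (Kt i) q (θ q i))
    (hsq : ∀ q i, i < n → (θ q (i + 1)).comp (φ q i) = (ψ q i).comp (θ q i))
    (b : ℕ) (hb1 : 1 ≤ b) (hbn : b ≤ n)
    (m : ℕ)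
    (s : Fin m → (K b).Homology 1)
    (dd : Fin m → ℕ∞)
    (hdd : ∀ i, dd i = ⊤ ∨ ∃ di : ℕ, dd i = (di : ℕ∞) ∧ b < di ∧ di ≤ n)
    (hsindep : LinearIndependent (ZMod 2)
      (fun i : Fin m =>
        Submodule.Quotient.mk (p := LinearMap.range (comps (φ 1) (Nat.sub_le b 1))) (s i)))
    (hsfin : ∀ (i : Fin m) (di : ℕ), dd i = (di : ℕ∞) →
      HasPersIntervalFin (φ 1) n b di (s i))
    (hsinf : ∀ i : Fin m, dd i = ⊤ → HasPersIntervalInf (φ 1) n b (s i)) :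
    (LinearIndependent (ZMod 2)
      (fun i : Fin m =>
        Submodule.Quotient.mk (p := LinearMap.range (comps (ψ 1) (Nat.sub_le b 1)))
          (θ 1 b (s i)))) ∧
    (∀ (i : Fin m) (di : ℕ), dd i = (di : ℕ∞) →
      HasPersIntervalFin (ψ 1) n b di (θ 1 b (s i))) ∧
    (∀ i : Fin m, dd i = ⊤ → HasPersIntervalInf (ψ 1) n b (θ 1 b (s i))) ∧
    (∀ q : ℕ, 1 < q → ∀ i : ℕ, 1 ≤ i → i ≤ n → Function.Bijective (θ q i)) :=
  stmt15_general n k K Kt hKt0 hKtmono P z hznew hKt φ ψ θ hψ hθ hsq b hbn m s dd hsindep hsfin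
    hsinf
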